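/- Let p ∈ (0,2], ε ∈ (0,1] and k an integer with 1 ≤ k ≤ n/2, and suppose the level set S_j contributes (for the trimmed-k problem). Write v = ζ(1+ε)^{t−j}. Then for every integer w ≥ 0, the number of indices i with k < i ≤ n−k and v/2^{w+1} ≤ |a_i| < v/2^w is at most 4 · (log m/ε²) · s_j · 2^{wp}. -/

import Mathlib

open Finset

noncomputable section

/-- `t = 1 + log_{1+ε} m`, all logarithms natural. -/
def tExp (ε m : ℝ) : ℝ := 1 + Real.log m / Real.log (1 + ε)

/-- The level set `S_j = {i : ζ(1+ε)^{t-j-1} ≤ |x_i| < ζ(1+ε)^{t-j}}`. -/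
def levelSet {n : ℕ} (x : Fin n → ℤ) (ε m ζ : ℝ) (j : ℕ) : Finset (Fin n) :=
  Finset.univ.filter fun i =>
    ζ * (1 + ε) ^ (tExp ε m - (j : ℝ) - 1) ≤ |(x i : ℝ)| ∧
      |(x i : ℝ)| < ζ * (1 + ε) ^ (tExp ε m - (j : ℝ))

/-- `rank(v)`: the number of indices with `|x_i| > v`. -/
def rankOf {n : ℕ} (x : Fin n → ℤ) (v : ℝ) : ℕ :=
  (Finset.univ.filter fun i : Fin n => v < |(x i : ℝ)|).card

/-- `Σ_{i=1}^k |a_i|^p` (paper is 1-indexed; here `a` is 0-indexed). -/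
def topSum {n : ℕ} (a : Fin n → ℤ) (p : ℝ) (k : ℕ) : ℝ :=
  ∑ i ∈ Finset.univ.filter (fun i : Fin n => (i : ℕ) < k), |(a i : ℝ)| ^ p

/-- `Σ_{i=k+1}^n |a_i|^p = ‖x_{-k}‖_p^p` (paper is 1-indexed). -/
def tailSum {n : ℕ} (a : Fin n → ℤ) (p : ℝ) (k : ℕ) : ℝ :=
  ∑ i ∈ Finset.univ.filter (fun i : Fin n => k ≤ (i : ℕ)), |(a i : ℝ)| ^ p

/-- `Σ_{i=k+1}^{n-k} |a_i|^p` (paper is 1-indexed). -/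
def midSum {n : ℕ} (a : Fin n → ℤ) (p : ℝ) (k : ℕ) : ℝ :=
  ∑ i ∈ Finset.univ.filter (fun i : Fin n => k ≤ (i : ℕ) ∧ (i : ℕ) < n - k), |(a i : ℝ)| ^ p

/-- `|a_k|` for paper (1-indexed) index `k`, i.e. 0-indexed entry `k-1`. -/
def aAbs {n : ℕ} (a : Fin n → ℤ) (k : ℕ) : ℝ :=
  if h : k - 1 < n then |(a ⟨k - 1, h⟩ : ℝ)| else 0

/-- `a` is `x` rearranged in non-increasing order of absolute value. -/
def IsRearrangement {n : ℕ} (x a : Fin n → ℤ) : Prop :=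
  (∃ σ : Equiv.Perm (Fin n), ∀ i, a i = x (σ i)) ∧
    ∀ i i' : Fin n, i ≤ i' → |a i'| ≤ |a i|

/-- The level set `S_j` contributes (for the top-`k` problem with exponent `p`). -/
def ContributesTop {n : ℕ} (x a : Fin n → ℤ) (p ε m ζ : ℝ) (j k : ℕ) : Prop :=
  ε ^ 2 / Real.log m * topSum a p k ≤ ∑ i ∈ levelSet x ε m ζ j, |(x i : ℝ)| ^ p

/-- The level set `S_j` contributes (for the trimmed-`k` problem with exponent `p`). -/
def ContributesTrim {n : ℕ} (x a : Fin n → ℤ) (p ε m ζ : ℝ) (j k : ℕ) : Prop :=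
  ε ^ 2 / Real.log m * (midSum a p k + k * aAbs a k ^ p) ≤
    ∑ i ∈ levelSet x ε m ζ j, |(x i : ℝ)| ^ p

/-
Markov-type counting: every index of the band contributes at least `(v/2^{w+1})^p` to the trimmed
sum, while a contributing level set bounds that sum by `(log m/ε²)·s_j·v^p`, since each of its
elements is below `v`. Dividing leaves `(2^{w+1})^p = 2^p·2^{wp} ≤ 4·2^{wp}` for `p ≤ 2`.
-/

def midBand {n : ℕ} (a : Fin n → ℤ) (k w : ℕ) (v : ℝ) : Finset (Fin n) :=
  univ.filter fun i : Fin n =>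
    (k ≤ (i : ℕ) ∧ (i : ℕ) < n - k) ∧ v / 2 ^ (w + 1) ≤ |(a i : ℝ)| ∧ |(a i : ℝ)| < v / 2 ^ w

lemma two_pow_succ_rpow_le {p : ℝ} (hp : p ≤ 2) (w : ℕ) :
    ((2 : ℝ) ^ (w + 1)) ^ p ≤ 4 * 2 ^ ((w : ℝ) * p) := by
  have h2p : (2 : ℝ) ^ p ≤ 4 :=
    calc (2 : ℝ) ^ p ≤ 2 ^ (2 : ℝ) := Real.rpow_le_rpow_of_exponent_le one_le_two hp
      _ = 4 := by norm_num
  rw [← Real.rpow_natCast, ← Real.rpow_mul zero_le_two, Nat.cast_succ, add_mul, one_mul,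
    Real.rpow_add zero_lt_two, mul_comm]
  gcongr

lemma aAbs_nonneg {n : ℕ} (a : Fin n → ℤ) (k : ℕ) : 0 ≤ aAbs a k := by
  unfold aAbs
  split <;> simp

lemma ContributesTrim.midSum_le {n : ℕ} {x a : Fin n → ℤ} {p ε m ζ : ℝ} {j k : ℕ}
    (h : ContributesTrim x a p ε m ζ j k) (hε : ε ≠ 0) (hm : 0 < Real.log m) :
    midSum a p k ≤ Real.log m / ε ^ 2 * ∑ i ∈ levelSet x ε m ζ j, |(x i : ℝ)| ^ p := by
  have hc : 0 < ε ^ 2 / Real.log m := by positivity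
  have hk : 0 ≤ (k : ℝ) * aAbs a k ^ p := by
    have := aAbs_nonneg a k
    positivity
  rw [← inv_div, le_inv_mul_iff₀ hc]
  calc ε ^ 2 / Real.log m * midSum a p k
      ≤ ε ^ 2 / Real.log m * (midSum a p k + k * aAbs a k ^ p) := by gcongr; linarith
    _ ≤ _ := h

lemma sum_rpow_levelSet_le {n : ℕ} (x : Fin n → ℤ) (ε m ζ : ℝ) (j : ℕ) {p : ℝ} (hp : 0 ≤ p) :
    ∑ i ∈ levelSet x ε m ζ j, |(x i : ℝ)| ^ p ≤
      #(levelSet x ε m ζ j) * (ζ * (1 + ε) ^ (tExp ε m - j)) ^ p := by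
  rw [← nsmul_eq_mul]
  refine sum_le_card_nsmul _ _ _ fun i hi => ?_
  exact Real.rpow_le_rpow (abs_nonneg _) (mem_filter.1 hi).2.2.le hp

lemma card_midBand_mul_rpow_le_midSum {n : ℕ} (a : Fin n → ℤ) (k w : ℕ) {p v : ℝ}
    (hp : 0 ≤ p) (hv : 0 ≤ v) :
    #(midBand a k w v) * (v / 2 ^ (w + 1)) ^ p ≤ midSum a p k := by
  rw [← nsmul_eq_mul]
  calc #(midBand a k w v) • (v / 2 ^ (w + 1)) ^ p
      ≤ ∑ i ∈ midBand a k w v, |(a i : ℝ)| ^ p :=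
        card_nsmul_le_sum _ _ _ fun i hi =>
          Real.rpow_le_rpow (by positivity) (mem_filter.1 hi).2.2.1 hp
    _ ≤ midSum a p k :=
        sum_le_sum_of_subset_of_nonneg (monotone_filter_right _ fun _ _ h => h.1)
          fun _ _ _ => by positivity

theorem stmt_9_general (n : ℕ) (x a : Fin n → ℤ) (p ε m ζ : ℝ) (k j w : ℕ)
    (hp1 : 0 < p) (hp2 : p ≤ 2) (hε1 : 0 < ε)
    (hm1 : 2 ≤ m)
    (hζ1 : 1 / 2 ≤ ζ)
    (hcon : ContributesTrim x a p ε m ζ j k) :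
    ∀ v : ℝ, v = ζ * (1 + ε) ^ (tExp ε m - (j : ℝ)) →
    ((Finset.univ.filter fun i : Fin n =>
        (k ≤ (i : ℕ) ∧ (i : ℕ) < n - k) ∧
          v / 2 ^ (w + 1) ≤ |(a i : ℝ)| ∧ |(a i : ℝ)| < v / 2 ^ w).card : ℝ) ≤
      4 * (Real.log m / ε ^ 2) * ((levelSet x ε m ζ j).card : ℝ) * 2 ^ ((w : ℝ) * p) := by
  intro v hv
  change (#(midBand a k w v) : ℝ) ≤ _
  have hlog : 0 < Real.log m := Real.log_pos (by linarith)
  have hζ : 0 < ζ := by linarith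
  have hv0 : 0 < v := by rw [hv]; positivity
  have hL : 0 < v / 2 ^ (w + 1) := by positivity
  have key : #(midBand a k w v) * (v / 2 ^ (w + 1)) ^ p ≤
      Real.log m / ε ^ 2 * #(levelSet x ε m ζ j) * ((2 : ℝ) ^ (w + 1)) ^ p *
        (v / 2 ^ (w + 1)) ^ p :=
    calc _ ≤ midSum a p k := card_midBand_mul_rpow_le_midSum a k w hp1.le hv0.le
      _ ≤ Real.log m / ε ^ 2 * ∑ i ∈ levelSet x ε m ζ j, |(x i : ℝ)| ^ p :=
        hcon.midSum_le hε1.ne' hlog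
      _ ≤ Real.log m / ε ^ 2 * (#(levelSet x ε m ζ j) * v ^ p) := by
        gcongr
        exact hv ▸ sum_rpow_levelSet_le x ε m ζ j hp1.le
      _ = _ := by
        have hv_eq : v = 2 ^ (w + 1) * (v / 2 ^ (w + 1)) := by field_simp
        rw [hv_eq, Real.mul_rpow (by positivity) hL.le, ← hv_eq]
        ring
  calc (#(midBand a k w v) : ℝ)
      ≤ Real.log m / ε ^ 2 * #(levelSet x ε m ζ j) * ((2 : ℝ) ^ (w + 1)) ^ p :=
        le_of_mul_le_mul_right key (Real.rpow_pos_of_pos hL p)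
    _ ≤ Real.log m / ε ^ 2 * #(levelSet x ε m ζ j) * (4 * 2 ^ ((w : ℝ) * p)) := by
        gcongr
        exact two_pow_succ_rpow_le hp2 w
    _ = _ := by ring

/-- if `S_j` contributes for the trimmed-`k` problem, then for every `w ≥ 0` the
number of indices `i` with `k < i ≤ n−k` (paper 1-indexed) and `v/2^{w+1} ≤ |a_i| < v/2^w` is at
most `4 · (log m/ε²) · s_j · 2^{wp}`, where `v = ζ(1+ε)^{t-j}`. -/
theorem stmt_9 (n : ℕ) (hn : 2 ≤ n) (x a : Fin n → ℤ) (p ε m ζ : ℝ) (k j w : ℕ)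
    (hp1 : 0 < p) (hp2 : p ≤ 2) (hε1 : 0 < ε) (hε2 : ε ≤ 1)
    (hk1 : 1 ≤ k) (hk2 : 2 * k ≤ n)
    (hra : IsRearrangement x a)
    (hxm : ∀ i, |(x i : ℝ)| ≤ m) (hm1 : 2 ≤ m) (hm2 : m ≤ (n : ℝ))
    (hζ1 : 1 / 2 ≤ ζ) (hζ2 : ζ ≤ 1)
    (hcon : ContributesTrim x a p ε m ζ j k) :
    ∀ v : ℝ, v = ζ * (1 + ε) ^ (tExp ε m - (j : ℝ)) →
    ((Finset.univ.filter fun i : Fin n =>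
        (k ≤ (i : ℕ) ∧ (i : ℕ) < n - k) ∧
          v / 2 ^ (w + 1) ≤ |(a i : ℝ)| ∧ |(a i : ℝ)| < v / 2 ^ w).card : ℝ) ≤
      4 * (Real.log m / ε ^ 2) * ((levelSet x ε m ζ j).card : ℝ) * 2 ^ ((w : ℝ) * p) :=
  stmt_9_general n x a p ε m ζ k j w hp1 hp2 hε1 hm1 hζ1 hcon
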